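/- Let H be a group containing a non-identity element, let G be an ICC group, and let G act on a set X with every orbit infinite. Then the generalized wreath product H ≀_X G = W ⋊ G is ICC; that is, the conjugacy class of every non-identity element of W ⋊ G is infinite. -/

import Mathlib

/-- The restricted direct sum `H^{⊕X}`: the subgroup of `X → H` consisting of functions
equal to the identity in all but finitely many coordinates. -/
def restrictedProd (H X : Type) [Group H] : Subgroup (X → H) where
  carrier := {f | (Function.mulSupport f).Finite}
  one_mem' := by simp [Function.mulSupport_one]
  mul_mem' := by
    intro a b ha hb
    exact ((ha.union hb).subset (Function.mulSupport_mul a b))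
  inv_mem' := by
    intro a ha
    simpa [Function.mulSupport_inv] using ha

/-- The shift action of `G` on `H^{⊕X}` by automorphisms, `(g·f)(x) = f(g⁻¹·x)`. -/
def wreathShift (H G X : Type) [Group H] [Group G] [MulAction G X] :
    G →* MulAut ↥(restrictedProd H X) where
  toFun g :=
    { toFun := fun f => ⟨fun x => (f : X → H) (g⁻¹ • x),
        Set.Finite.subset (f.2.image (g • ·)) (by
          intro x hx
          exact ⟨g⁻¹ • x, hx, smul_inv_smul g x⟩)⟩
      invFun := fun f => ⟨fun x => (f : X → H) (g • x),
        Set.Finite.subset (f.2.image (g⁻¹ • ·)) (by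
          intro x hx
          exact ⟨g • x, hx, inv_smul_smul g x⟩)⟩
      left_inv := by
        intro f
        ext x
        simp
      right_inv := by
        intro f
        ext x
        simp
      map_mul' := by
        intro f₁ f₂
        rfl }
  map_one' := by
    ext f x
    simp
  map_mul' := by
    intro g₁ g₂
    ext f x
    simp [mul_smul]

/-! Conjugating `w = (f, g)` by `k ∈ G` replaces `f` by its shift `k • f`, whose support is
`k • supp f`. If `f ≠ 1`, the supports of these shifts cover a whole `G`-orbit, which is infinite,
so infinitely many of them are distinct. If `f = 1`, then `g ≠ 1`, and the projection onto `G`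
maps the conjugacy class of `w` onto that of `g`, which is infinite since `G` is ICC. -/

theorem Set.Infinite.conjugatesOf_of_map {A B : Type*} [Group A] [Group B] {f : A →* B}
    (hf : Function.Surjective f) {a : A} (h : (conjugatesOf (f a)).Infinite) :
    (conjugatesOf a).Infinite := by
  refine Set.Infinite.of_image f (h.mono ?_)
  intro b hb
  obtain ⟨c, rfl⟩ := isConj_iff.mp hb
  obtain ⟨c, rfl⟩ := hf c
  exact ⟨c * a * c⁻¹, isConj_iff.mpr ⟨c, rfl⟩, by simp⟩

namespace SemidirectProduct

variable {N G : Type*} [Group N] [Group G] {φ : G →* MulAut N}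

theorem left_inr_mul_mul_inr_inv (g : G) (w : N ⋊[φ] G) :
    (inr g * w * (inr g)⁻¹).left = φ g w.left := by
  simp

theorem infinite_conjugatesOf_of_right (w : N ⋊[φ] G)
    (h : (conjugatesOf w.right).Infinite) : (conjugatesOf w).Infinite :=
  Set.Infinite.conjugatesOf_of_map rightHom_surjective h

theorem infinite_conjugatesOf_of_left (w : N ⋊[φ] G)
    (h : (Set.range fun g => φ g w.left).Infinite) : (conjugatesOf w).Infinite := by
  refine Set.Infinite.of_image left (h.mono ?_)
  rintro _ ⟨g, rfl⟩
  exact ⟨inr g * w * (inr g)⁻¹, isConj_iff.mpr ⟨inr g, rfl⟩, left_inr_mul_mul_inr_inv g w⟩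

end SemidirectProduct

section Wreath

variable {H G X : Type} [Group H] [Group G] [MulAction G X]

@[simp]
theorem wreathShift_apply_apply (g : G) (f : restrictedProd H X) (x : X) :
    (wreathShift H G X g f : X → H) x = (f : X → H) (g⁻¹ • x) :=
  rfl

theorem orbit_subset_biUnion_mulSupport_wreathShift (f : restrictedProd H X) {x : X}
    (hx : (f : X → H) x ≠ 1) :
    MulAction.orbit G x ⊆
      ⋃ f' ∈ Set.range fun g => wreathShift H G X g f, Function.mulSupport (f' : X → H) := by
  rintro _ ⟨g, rfl⟩
  exact Set.mem_biUnion ⟨g, rfl⟩ (by simpa using hx)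

theorem infinite_range_wreathShift (f : restrictedProd H X) {x : X}
    (hx : (f : X → H) x ≠ 1) (horb : (MulAction.orbit G x).Infinite) :
    (Set.range fun g => wreathShift H G X g f).Infinite := fun hfin =>
  horb <| (hfin.biUnion fun f' _ => f'.2).subset (orbit_subset_biUnion_mulSupport_wreathShift f hx)

end Wreath

theorem stmt11_general (H G X : Type) [Group H] [Group G] [MulAction G X]
    (hG : ∀ g : G, g ≠ 1 → {x : G | IsConj g x}.Infinite)
    (horb : ∀ x : X, (MulAction.orbit G x).Infinite) :
    ∀ w : SemidirectProduct ↥(restrictedProd H X) G (wreathShift H G X),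
      w ≠ 1 → {u | IsConj w u}.Infinite := by
  intro w hw
  by_cases hleft : w.left = 1
  · have hright : w.right ≠ 1 := fun h => hw (SemidirectProduct.ext hleft h)
    exact SemidirectProduct.infinite_conjugatesOf_of_right w (hG _ hright)
  · obtain ⟨x, hx⟩ : ∃ x, (w.left : X → H) x ≠ 1 := by
      by_contra! h
      exact hleft (Subtype.ext (funext h))
    exact SemidirectProduct.infinite_conjugatesOf_of_left w
      (infinite_range_wreathShift w.left hx (horb x))

/-- Let `H` be a group with a non-identity element, let `G` be an ICC group acting on a set
`X` with every orbit infinite. Then the generalized wreath product `H ≀_X G = H^{⊕X} ⋊ G`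
is ICC: every non-identity element has an infinite conjugacy class. -/
theorem stmt11 (H G X : Type) [Group H] [Group G] [MulAction G X]
    (hH : ∃ h : H, h ≠ 1)
    (hG : ∀ g : G, g ≠ 1 → {x : G | IsConj g x}.Infinite)
    (horb : ∀ x : X, (MulAction.orbit G x).Infinite) :
    ∀ w : SemidirectProduct ↥(restrictedProd H X) G (wreathShift H G X),
      w ≠ 1 → {u | IsConj w u}.Infinite :=
  stmt11_general H G X hG horb
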